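/- arXiv:1705.00385 — 2 statements merged into one kernel-verified Lean document; each statement's English description precedes it below -/
import Mathlib

section
/- Let (Ω, P) be a finite probability space and A, C, H ⊆ Ω with P(H) > 0 and P(A∩H) > 0, and set x = P(A∩H)/P(H). Let z be the prevision of the conjunction C∧(A|H), determined by z = P(A∩H∩C) + x·P(Hᶜ∩C), and let μ be the iterated conditional prevision, a real number determined by μ = z + μ·P(Aᶜ∩H) + μ(1−x)·P(Hᶜ). Then z = μ·x. -/
theorem stmt_5 {Ω : Type*} [Fintype Ω] [DecidableEq Ω]
    (p : Ω → ℝ) (hp : ∀ ω, 0 ≤ p ω) (hsum : ∑ ω, p ω = 1)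
    (A C H : Finset Ω)
    (hH : 0 < ∑ ω ∈ H, p ω) (hAH : 0 < ∑ ω ∈ A ∩ H, p ω)
    (x z μ : ℝ)
    (hx : x = (∑ ω ∈ A ∩ H, p ω) / (∑ ω ∈ H, p ω)) (hxpos : 0 < x)
    (hz : z = (∑ ω ∈ A ∩ H ∩ C, p ω) + x * (∑ ω ∈ Hᶜ ∩ C, p ω))
    (hμ : μ = z + μ * (∑ ω ∈ Aᶜ ∩ H, p ω) + μ * (1 - x) * (∑ ω ∈ Hᶜ, p ω)) :
    z = μ * x := by
  have h1 : (∑ ω ∈ H, p ω) + (∑ ω ∈ Hᶜ, p ω) = 1 := by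
    rw [Finset.sum_add_sum_compl, hsum]
  have hAc : Aᶜ ∩ H = H \ A := by
    ext ω; simp [Finset.mem_sdiff, and_comm]
  have h2 : (∑ ω ∈ A ∩ H, p ω) + (∑ ω ∈ Aᶜ ∩ H, p ω) = ∑ ω ∈ H, p ω := by
    rw [hAc, Finset.inter_comm, Finset.sum_inter_add_sum_sdiff]
  have hx' : x * (∑ ω ∈ H, p ω) = ∑ ω ∈ A ∩ H, p ω := by
    rw [hx]; field_simp
  linear_combination -hμ - μ*(1-x)*h1 - μ*h2 - μ*hx'
end

section
/- For every (x, y, z) ∈ [0,1]³ there exist nonnegative reals λ₁, λ₂, λ₃, λ₄ with λ₁+λ₂+λ₃+λ₄ = 1 such that: λ₁ + λ₃ = x, λ₁ + (λ₂ + λ₄)·y = y, and λ₂ + (λ₁ + λ₃)·z = z. Explicitly, λ₁ = xy, λ₂ = z(1−x), λ₃ = (1−y)x, λ₄ = (1−x)(1−z) works. -/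
theorem stmt_6 (x y z : ℝ)
    (hx : x ∈ Set.Icc (0:ℝ) 1) (hy : y ∈ Set.Icc (0:ℝ) 1) (hz : z ∈ Set.Icc (0:ℝ) 1) :
    ∃ l1 l2 l3 l4 : ℝ, 0 ≤ l1 ∧ 0 ≤ l2 ∧ 0 ≤ l3 ∧ 0 ≤ l4 ∧
      l1 + l2 + l3 + l4 = 1 ∧
      l1 + l3 = x ∧
      l1 + (l2 + l4) * y = y ∧
      l2 + (l1 + l3) * z = z := by
  obtain ⟨hx0, hx1⟩ := hx
  obtain ⟨hy0, hy1⟩ := hy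
  obtain ⟨hz0, hz1⟩ := hz
  refine ⟨x*y, z*(1-x), (1-y)*x, (1-x)*(1-z), ?_, ?_, ?_, ?_, by ring, by ring, by ring, by ring⟩
  · positivity
  · exact mul_nonneg hz0 (by linarith)
  · exact mul_nonneg (by linarith) hx0
  · exact mul_nonneg (by linarith) (by linarith)
end
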